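/- arXiv:1708.05487 — 3 statements merged into one kernel-verified Lean document; each statement's English description precedes it below -/
import Mathlib

section
/- In the nodewise regression setup, for every j ∈ {1,…,p} one has τ̂_j² = (1/n)·⟨X̃_j − X̃_{-j}θ̂_j, X̃_j⟩, i.e. the penalized residual quantity (1/n)‖X̃_j − X̃_{-j}θ̂_j‖₂² + λ⁽ʲ⁾‖θ̂_j‖₁ equals the normalized inner product of the residual X̃_j − X̃_{-j}θ̂_j with the column X̃_j. -/
/-!
Along the ray `t ↦ t • θ̂` the lasso objective is, for `t > 0`, the smooth function
`t ↦ c‖y - t Aθ̂‖² + λ t ‖θ̂‖₁`, which is minimal at `t = 1`. Its derivative there vanishes, so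
`2c ⟨y - Aθ̂, Aθ̂⟩ = λ ‖θ̂‖₁`; with `c = 1/(2n)` and `y = (y - Aθ̂) + Aθ̂` this is the identity.
-/

open Finset Matrix

section Lasso

variable {ι κ : Type*} [Fintype ι] [Fintype κ]

theorem hasDerivAt_sum_sq_sub_mul (y u : ι → ℝ) (s : ℝ) :
    HasDerivAt (fun t => ∑ i, (y i - t * u i) ^ 2) (-2 * ∑ i, (y i - s * u i) * u i) s := by
  refine (HasDerivAt.fun_sum (u := univ) fun i _ =>
    (((hasDerivAt_id' s).mul_const (u i)).const_sub (y i)).pow 2).congr_deriv ?_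
  rw [mul_sum]
  refine sum_congr rfl fun i _ => ?_
  ring

theorem two_mul_inner_residual_fit_eq_penalty_of_lasso_min (A : Matrix ι κ ℝ) (y : ι → ℝ)
    (c lam : ℝ) (θ : κ → ℝ)
    (hmin : ∀ θ' : κ → ℝ,
      c * ∑ i, (y i - (A *ᵥ θ) i) ^ 2 + lam * ∑ k, |θ k| ≤
        c * ∑ i, (y i - (A *ᵥ θ') i) ^ 2 + lam * ∑ k, |θ' k|) :
    2 * c * ∑ i, (y i - (A *ᵥ θ) i) * (A *ᵥ θ) i = lam * ∑ k, |θ k| := by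
  set u := A *ᵥ θ
  set S := ∑ k, |θ k|
  set ψ : ℝ → ℝ := fun t => c * ∑ i, (y i - t * u i) ^ 2 + lam * (t * S)
  have hψ_le : ∀ t, 0 < t → ψ 1 ≤ ψ t := by
    intro t ht
    simpa [ψ, u, S, mulVec_smul, abs_mul, abs_of_pos ht, ← mul_sum] using hmin (t • θ)
  have hψ_min : IsLocalMin ψ 1 := Filter.mem_of_superset (Ioi_mem_nhds one_pos) hψ_le
  have hψ_deriv : HasDerivAt ψ (c * (-2 * ∑ i, (y i - 1 * u i) * u i) + lam * S) 1 :=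
    ((hasDerivAt_sum_sq_sub_mul y u 1).const_mul c).add
      (((hasDerivAt_id 1).mul_const S).const_mul lam |>.congr_deriv (by simp))
  have hzero := hψ_min.hasDerivAt_eq_zero hψ_deriv
  simp only [one_mul] at hzero
  linarith

end Lasso

theorem stmt_2_general (n p : ℕ)
    (X : Matrix (Fin n) (Fin p) ℝ) (lam : Fin p → ℝ)
    (θhat : ∀ j : Fin p, {k : Fin p // k ≠ j} → ℝ)
    (hmin : ∀ j : Fin p, ∀ θ : {k : Fin p // k ≠ j} → ℝ,
      (1 / (2 * (n : ℝ))) * ∑ i, (X i j - ∑ k, X i k.1 * θhat j k) ^ 2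
          + lam j * ∑ k, |θhat j k| ≤
      (1 / (2 * (n : ℝ))) * ∑ i, (X i j - ∑ k, X i k.1 * θ k) ^ 2
          + lam j * ∑ k, |θ k|) :
    ∀ j : Fin p,
      (1 / (n : ℝ)) * ∑ i, (X i j - ∑ k, X i k.1 * θhat j k) ^ 2
          + lam j * ∑ k, |θhat j k| =
      (1 / (n : ℝ)) * ∑ i, (X i j - ∑ k, X i k.1 * θhat j k) * X i j := by
  intro j
  set fit := fun i => ∑ k, X i k.1 * θhat j k
  have hstat : 2 * (1 / (2 * (n : ℝ))) * ∑ i, (X i j - fit i) * fit i = lam j * ∑ k, |θhat j k| :=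
    two_mul_inner_residual_fit_eq_penalty_of_lasso_min (X.submatrix id Subtype.val) (fun i => X i j)
      _ _ _ (hmin j)
  have hsplit : ∑ i, (X i j - fit i) * X i j =
      ∑ i, (X i j - fit i) ^ 2 + ∑ i, (X i j - fit i) * fit i := by
    rw [← sum_add_distrib]
    exact sum_congr rfl fun i _ => by ring
  rw [← hstat, hsplit, show 2 * (1 / (2 * (n : ℝ))) = 1 / n by field_simp]
  ring

theorem stmt_2 (n p : ℕ) (hn : 0 < n) (hp : 2 ≤ p)
    (X : Matrix (Fin n) (Fin p) ℝ) (lam : Fin p → ℝ) (hlam : ∀ j, 0 < lam j)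
    (θhat : ∀ j : Fin p, {k : Fin p // k ≠ j} → ℝ)
    (hmin : ∀ j : Fin p, ∀ θ : {k : Fin p // k ≠ j} → ℝ,
      (1 / (2 * (n : ℝ))) * ∑ i, (X i j - ∑ k, X i k.1 * θhat j k) ^ 2
          + lam j * ∑ k, |θhat j k| ≤
      (1 / (2 * (n : ℝ))) * ∑ i, (X i j - ∑ k, X i k.1 * θ k) ^ 2
          + lam j * ∑ k, |θ k|) :
    ∀ j : Fin p,
      (1 / (n : ℝ)) * ∑ i, (X i j - ∑ k, X i k.1 * θhat j k) ^ 2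
          + lam j * ∑ k, |θhat j k| =
      (1 / (n : ℝ)) * ∑ i, (X i j - ∑ k, X i k.1 * θhat j k) * X i j :=
  stmt_2_general n p X lam θhat hmin
end

section
/- In the nodewise regression setup with all τ̂_j² > 0, the approximate-inverse error satisfies max_{j∈[p]} ‖Θ̂_{j·}Σ̃ − e_jᵀ‖_∞ ≤ max_{j∈[p]} (λ⁽ʲ⁾ / τ̂_j²), where Θ̂_{j·} is the j-th row of Θ̂, e_j is the j-th standard basis vector of ℝᵖ, and ‖·‖_∞ is the maximum absolute value of the coordinates of a vector in ℝᵖ. -/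
/-!
Write `r_j = X̃_j - X̃_{-j} θ̂_j = X̃ Ĉ_jᵀ` for the residual of the `j`-th Lasso fit; then
`(Θ̂ Σ̃)_{jk} = r_j ⬝ X̃_k / (n τ̂_j²)`. Comparing the Lasso objective at `θ̂_j` and at `θ̂_j + t v`
and letting `t → 0⁺` gives the KKT conditions without subgradient calculus: with `v = e_k` one
gets `|r_j ⬝ X̃_k| ≤ n λ⁽ʲ⁾` for `k ≠ j`, and with `v = ± θ̂_j` one gets
`r_j ⬝ X̃_{-j} θ̂_j = n λ⁽ʲ⁾ ‖θ̂_j‖₁`, hence `r_j ⬝ X̃_j = ‖r_j‖² + n λ⁽ʲ⁾ ‖θ̂_j‖₁ = n τ̂_j²`.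
So the diagonal error vanishes and the off-diagonal ones are at most `λ⁽ʲ⁾ / τ̂_j²`.
-/

open Finset Filter Topology Matrix

lemma le_of_eventually_mul_le_mul_add_sq {a b c : ℝ}
    (h : ∀ᶠ t in 𝓝[>] (0 : ℝ), t * a ≤ t * c + t ^ 2 * b) : a ≤ c := by
  have hlim : Tendsto (fun t : ℝ => c + t * b) (𝓝[>] 0) (𝓝 c) := by
    have : Tendsto (fun t : ℝ => c + t * b) (𝓝 0) (𝓝 (c + 0 * b)) :=
      (continuous_const.add (continuous_id.mul continuous_const)).tendsto 0
    simpa using this.mono_left nhdsWithin_le_nhds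
  refine ge_of_tendsto hlim ?_
  filter_upwards [h, self_mem_nhdsWithin] with t ht (htpos : 0 < t)
  exact le_of_mul_le_mul_left (by linarith) htpos

section Lasso

variable {ι κ : Type*} [Fintype ι] [Fintype κ]

-- The paper's normalisation `(1/(2n))‖y - Aθ‖² + λ‖θ‖₁` is `lassoObjective A y (n * λ) θ / n`.
noncomputable def lassoObjective (A : Matrix ι κ ℝ) (y : ι → ℝ) (μ : ℝ) (θ : κ → ℝ) : ℝ :=
  (∑ i, (y i - (A *ᵥ θ) i) ^ 2) / 2 + μ * ∑ k, |θ k|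

variable {A : Matrix ι κ ℝ} {y : ι → ℝ} {μ : ℝ} {θ : κ → ℝ}

lemma mul_residual_dotProduct_le
    (hmin : ∀ θ', lassoObjective A y μ θ ≤ lassoObjective A y μ θ') (v : κ → ℝ) (t : ℝ) :
    t * ((y - A *ᵥ θ) ⬝ᵥ (A *ᵥ v)) ≤
      t ^ 2 * ((A *ᵥ v) ⬝ᵥ (A *ᵥ v)) / 2 + μ * (∑ k, |θ k + t * v k| - ∑ k, |θ k|) := by
  have h := hmin (θ + t • v)
  have hexpand : ∑ i, (y i - (A *ᵥ (θ + t • v)) i) ^ 2 = ∑ i, (y i - (A *ᵥ θ) i) ^ 2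
      - 2 * t * ((y - A *ᵥ θ) ⬝ᵥ (A *ᵥ v)) + t ^ 2 * ((A *ᵥ v) ⬝ᵥ (A *ᵥ v)) := by
    simp only [mulVec_add, mulVec_smul, dotProduct, Pi.add_apply, Pi.sub_apply, Pi.smul_apply,
      smul_eq_mul, mul_sum, ← sum_sub_distrib, ← sum_add_distrib]
    exact sum_congr rfl fun i _ => by ring
  simp only [lassoObjective, hexpand, Pi.add_apply, Pi.smul_apply, smul_eq_mul] at h
  linarith

lemma abs_residual_dotProduct_col_le (hμ : 0 ≤ μ)
    (hmin : ∀ θ', lassoObjective A y μ θ ≤ lassoObjective A y μ θ') (k : κ) :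
    |(y - A *ᵥ θ) ⬝ᵥ A.col k| ≤ μ := by
  classical
  have hcoord : ∀ t, t * ((y - A *ᵥ θ) ⬝ᵥ A.col k) ≤ t ^ 2 * (A.col k ⬝ᵥ A.col k) / 2 + μ * |t| := by
    intro t
    have h := mul_residual_dotProduct_le hmin (Pi.single k 1) t
    rw [mulVec_single_one] at h
    have hnorm : ∑ l, |θ l + t * (Pi.single k 1 : κ → ℝ) l| - ∑ l, |θ l| ≤ |t| := by
      rw [← sum_sub_distrib, ← Fintype.sum_pi_single' k |t|]
      refine sum_le_sum fun l _ => ?_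
      rcases eq_or_ne l k with rfl | hl
      · simpa [add_comm |t|] using abs_add_le (θ l) t
      · simp [hl]
    nlinarith [mul_le_mul_of_nonneg_left hnorm hμ]
  rw [abs_le, neg_le]
  constructor
  · refine le_of_eventually_mul_le_mul_add_sq (b := (A.col k ⬝ᵥ A.col k) / 2) ?_
    filter_upwards [self_mem_nhdsWithin] with t (ht : 0 < t)
    have := hcoord (-t)
    rw [abs_neg, abs_of_pos ht] at this
    linarith
  · refine le_of_eventually_mul_le_mul_add_sq (b := (A.col k ⬝ᵥ A.col k) / 2) ?_
    filter_upwards [self_mem_nhdsWithin] with t (ht : 0 < t)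
    have := hcoord t
    rw [abs_of_pos ht] at this
    linarith

lemma residual_dotProduct_mulVec_eq
    (hmin : ∀ θ', lassoObjective A y μ θ ≤ lassoObjective A y μ θ') :
    (y - A *ᵥ θ) ⬝ᵥ (A *ᵥ θ) = μ * ∑ k, |θ k| := by
  have hscale : ∀ t, -1 < t → t * ((y - A *ᵥ θ) ⬝ᵥ (A *ᵥ θ)) ≤
      t ^ 2 * ((A *ᵥ θ) ⬝ᵥ (A *ᵥ θ)) / 2 + t * (μ * ∑ k, |θ k|) := by
    intro t ht
    have h := mul_residual_dotProduct_le hmin θ t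
    have hnorm : ∑ k, |θ k + t * θ k| = (1 + t) * ∑ k, |θ k| := by
      rw [mul_sum]
      refine sum_congr rfl fun k _ => ?_
      rw [show θ k + t * θ k = (1 + t) * θ k by ring, abs_mul, abs_of_pos (by linarith)]
    rw [hnorm] at h
    linarith
  apply le_antisymm
  · refine le_of_eventually_mul_le_mul_add_sq (b := ((A *ᵥ θ) ⬝ᵥ (A *ᵥ θ)) / 2) ?_
    filter_upwards [self_mem_nhdsWithin] with t (ht : 0 < t)
    linarith [hscale t (by linarith)]
  · refine le_of_eventually_mul_le_mul_add_sq (b := ((A *ᵥ θ) ⬝ᵥ (A *ᵥ θ)) / 2) ?_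
    filter_upwards [Ioo_mem_nhdsGT one_pos] with t ⟨ht0, ht1⟩
    linarith [hscale (-t) (by linarith)]

lemma residual_dotProduct_self_eq
    (hmin : ∀ θ', lassoObjective A y μ θ ≤ lassoObjective A y μ θ') :
    (y - A *ᵥ θ) ⬝ᵥ y = ∑ i, (y - A *ᵥ θ) i ^ 2 + μ * ∑ k, |θ k| := by
  nth_rw 2 [← sub_add_cancel y (A *ᵥ θ)]
  rw [dotProduct_add, residual_dotProduct_mulVec_eq hmin]
  simp [dotProduct, sq]

end Lasso

lemma sum_mul_sum_mul_eq_mulVec_dotProduct_col {ι κ : Type*} [Fintype ι] [Fintype κ]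
    (X : Matrix ι κ ℝ) (c : κ → ℝ) (k : κ) :
    ∑ l, c l * ∑ i, X i l * X i k = (X *ᵥ c) ⬝ᵥ X.col k := by
  simp only [mulVec, dotProduct, mul_sum, sum_mul]
  rw [sum_comm]
  exact sum_congr rfl fun i _ => sum_congr rfl fun l _ => by simp only [col_apply]; ring

def eraseCol {ι κ α : Type*} (X : Matrix ι κ α) (j : κ) : Matrix ι {k : κ // k ≠ j} α :=
  X.submatrix id Subtype.val

section Nodewise

variable {ι κ : Type*} [Fintype κ] [DecidableEq κ]

def nodewiseCoeff (j : κ) (θ : {k : κ // k ≠ j} → ℝ) : κ → ℝ :=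
  fun l => if h : l = j then 1 else -θ ⟨l, h⟩

variable {X : Matrix ι κ ℝ} {j : κ} {θ : {k : κ // k ≠ j} → ℝ}

lemma mulVec_nodewiseCoeff : X *ᵥ nodewiseCoeff j θ = X.col j - eraseCol X j *ᵥ θ := by
  ext i
  have hoff : ∀ k : {k // k ≠ j}, X i k * nodewiseCoeff j θ k = -(eraseCol X j i k * θ k) :=
    fun k => by simp [nodewiseCoeff, k.2, eraseCol]
  rw [mulVec, dotProduct, Fintype.sum_eq_add_sum_subtype_ne _ j, sum_congr rfl fun k _ => hoff k,
    sum_neg_distrib]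
  simp [nodewiseCoeff, mulVec, dotProduct, sub_eq_add_neg]

variable [Fintype ι]

lemma lassoObjective_eraseCol_div {N : ℝ} (hN : N ≠ 0) (lam : ℝ) (θ' : {k : κ // k ≠ j} → ℝ) :
    lassoObjective (eraseCol X j) (X.col j) (N * lam) θ' / N =
      1 / (2 * N) * ∑ i, (X i j - ∑ k, X i k.1 * θ' k) ^ 2 + lam * ∑ k, |θ' k| := by
  change ((∑ i, (X i j - ∑ k, X i k.1 * θ' k) ^ 2) / 2 + N * lam * ∑ k, |θ' k|) / N = _
  field_simp

lemma abs_residual_dotProduct_col_div_sub_le {μ τ : ℝ} (hμ : 0 ≤ μ) (hτ : 0 < τ)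
    (hmin : ∀ θ', lassoObjective (eraseCol X j) (X.col j) μ θ ≤
      lassoObjective (eraseCol X j) (X.col j) μ θ')
    (hτ_eq : τ = ∑ i, (X.col j - eraseCol X j *ᵥ θ) i ^ 2 + μ * ∑ k, |θ k|) (k : κ) :
    |(X.col j - eraseCol X j *ᵥ θ) ⬝ᵥ X.col k / τ - if k = j then 1 else 0| ≤ μ / τ := by
  split_ifs with hkj
  · rw [hkj, residual_dotProduct_self_eq hmin, ← hτ_eq, div_self hτ.ne', sub_self, abs_zero]
    positivity
  · rw [sub_zero, abs_div, abs_of_pos hτ]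
    exact div_le_div_of_nonneg_right (abs_residual_dotProduct_col_le hμ hmin ⟨k, hkj⟩) hτ.le

end Nodewise

theorem stmt_4 (n p : ℕ) (hn : 0 < n) (hp : 2 ≤ p)
    (X : Matrix (Fin n) (Fin p) ℝ) (lam : Fin p → ℝ) (hlam : ∀ j, 0 < lam j)
    (θhat : ∀ j : Fin p, {k : Fin p // k ≠ j} → ℝ)
    (hmin : ∀ j : Fin p, ∀ θ : {k : Fin p // k ≠ j} → ℝ,
      (1 / (2 * (n : ℝ))) * ∑ i, (X i j - ∑ k, X i k.1 * θhat j k) ^ 2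
          + lam j * ∑ k, |θhat j k| ≤
      (1 / (2 * (n : ℝ))) * ∑ i, (X i j - ∑ k, X i k.1 * θ k) ^ 2
          + lam j * ∑ k, |θ k|)
    (tau2 : Fin p → ℝ)
    (htau : ∀ j, tau2 j =
      (1 / (n : ℝ)) * ∑ i, (X i j - ∑ k, X i k.1 * θhat j k) ^ 2
          + lam j * ∑ k, |θhat j k|)
    (htaupos : ∀ j, 0 < tau2 j)
    (Theta : Matrix (Fin p) (Fin p) ℝ)
    (hTheta : ∀ j k, Theta j k =
      (if h : k = j then (1 : ℝ) else -(θhat j ⟨k, h⟩)) / tau2 j)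
    (Sigma : Matrix (Fin p) (Fin p) ℝ)
    (hSigma : ∀ k l, Sigma k l = (1 / (n : ℝ)) * ∑ i, X i k * X i l) :
    ∀ j k : Fin p,
      |∑ l, Theta j l * Sigma l k - (if k = j then (1 : ℝ) else 0)| ≤
        Finset.univ.sup' (Finset.univ_nonempty_iff.mpr ⟨⟨0, by omega⟩⟩)
          (fun j' => lam j' / tau2 j') := by
  intro j k
  have hn' : (0 : ℝ) < n := by exact_mod_cast hn
  have hlasso : ∀ θ, lassoObjective (eraseCol X j) (X.col j) (n * lam j) (θhat j) ≤
      lassoObjective (eraseCol X j) (X.col j) (n * lam j) θ := fun θ => by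
    have h := hmin j θ
    rwa [← lassoObjective_eraseCol_div hn'.ne', ← lassoObjective_eraseCol_div hn'.ne',
      div_le_div_iff_of_pos_right hn'] at h
  have hτ_eq : n * tau2 j = ∑ i, (X.col j - eraseCol X j *ᵥ θhat j) i ^ 2
      + n * lam j * ∑ k, |θhat j k| := by
    rw [htau]
    field_simp
    rfl
  have hrow : ∑ l, Theta j l * Sigma l k =
      (X *ᵥ nodewiseCoeff j (θhat j)) ⬝ᵥ X.col k / (n * tau2 j) := by
    rw [← sum_mul_sum_mul_eq_mulVec_dotProduct_col, sum_div]
    refine sum_congr rfl fun l _ => ?_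
    rw [hTheta, hSigma, nodewiseCoeff]
    ring
  have hentry := abs_residual_dotProduct_col_div_sub_le (mul_pos hn' (hlam j)).le
    (mul_pos hn' (htaupos j)) hlasso hτ_eq k
  rw [mul_div_mul_left _ _ hn'.ne', ← mulVec_nodewiseCoeff, ← hrow] at hentry
  exact hentry.trans (le_sup' (fun j' => lam j' / tau2 j') (mem_univ j))
end

section
/- In the nodewise regression setup with all τ̂_j² > 0, for every j ∈ {1,…,p} one has Θ̂_{j·} Σ̃ Θ̂_{j·}ᵀ ≤ 1/τ̂_j², i.e. the quadratic form of Σ̃ evaluated at the j-th row of Θ̂ is at most the j-th diagonal entry of Θ̂. -/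
/-!
Write `ĉ_j` for the `j`-th row of `Ĉ`, so that `Θ̂_{j·} = ĉ_j / τ̂_j²`. Since `X̃ ĉ_j` is the
nodewise residual `X̃_j - X̃_{-j} θ̂_j`, the quadratic form `ĉ_jᵀ Σ̃ ĉ_j` is the residual sum of
squares `‖X̃_j - X̃_{-j} θ̂_j‖² / n`, which is at most `τ̂_j²` because the `ℓ₁` penalty is
nonnegative. Dividing by `τ̂_j⁴` gives the bound `1 / τ̂_j²`.
-/

open Finset Matrix

/-- The row `ĉ_j` of `Ĉ` built from the coefficients `θ` of the regression of column `j`. -/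
def nodewiseRow {ι : Type*} [DecidableEq ι] (j : ι) (θ : {k : ι // k ≠ j} → ℝ) (k : ι) : ℝ :=
  if h : k = j then 1 else -θ ⟨k, h⟩

theorem mulVec_nodewiseRow {m ι : Type*} [Fintype ι] [DecidableEq ι] (X : Matrix m ι ℝ) (j : ι)
    (θ : {k : ι // k ≠ j} → ℝ) (i : m) :
    (X *ᵥ nodewiseRow j θ) i = X i j - ∑ k : {k : ι // k ≠ j}, X i k * θ k := by
  rw [mulVec, dotProduct, Fintype.sum_eq_add_sum_subtype_ne _ j, sub_eq_add_neg,
    ← sum_neg_distrib]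
  congr 1
  · simp [nodewiseRow]
  · refine sum_congr rfl fun k _ => ?_
    simp [nodewiseRow, k.2]

theorem quadForm_smul_gram {m ι : Type*} [Fintype m] [Fintype ι] (X : Matrix m ι ℝ) (c : ℝ)
    (v : ι → ℝ) :
    ∑ k, ∑ l, v k * (c * ∑ i, X i k * X i l) * v l = c * ∑ i, (X *ᵥ v) i ^ 2 := by
  simp only [mulVec, dotProduct, sq, mul_sum, sum_mul]
  conv_rhs => rw [sum_comm]; enter [2, k]; rw [sum_comm]
  refine sum_congr rfl fun k _ => sum_congr rfl fun l _ => sum_congr rfl fun i _ => ?_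
  ring

theorem quadForm_div {ι : Type*} [Fintype ι] (S : Matrix ι ι ℝ) (v : ι → ℝ) (t : ℝ) :
    ∑ k, ∑ l, v k / t * S k l * (v l / t) = (∑ k, ∑ l, v k * S k l * v l) / t ^ 2 := by
  simp only [sum_div]
  refine sum_congr rfl fun k _ => sum_congr rfl fun l _ => ?_
  ring

theorem stmt_5_general (n p : ℕ)
    (X : Matrix (Fin n) (Fin p) ℝ) (lam : Fin p → ℝ) (hlam : ∀ j, 0 < lam j)
    (θhat : ∀ j : Fin p, {k : Fin p // k ≠ j} → ℝ)
    (tau2 : Fin p → ℝ)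
    (htau : ∀ j, tau2 j =
      (1 / (n : ℝ)) * ∑ i, (X i j - ∑ k, X i k.1 * θhat j k) ^ 2
          + lam j * ∑ k, |θhat j k|)
    (htaupos : ∀ j, 0 < tau2 j)
    (Theta : Matrix (Fin p) (Fin p) ℝ)
    (hTheta : ∀ j k, Theta j k =
      (if h : k = j then (1 : ℝ) else -(θhat j ⟨k, h⟩)) / tau2 j)
    (Sigma : Matrix (Fin p) (Fin p) ℝ)
    (hSigma : ∀ k l, Sigma k l = (1 / (n : ℝ)) * ∑ i, X i k * X i l) :
    ∀ j : Fin p, ∑ k, ∑ l, Theta j k * Sigma k l * Theta j l ≤ 1 / tau2 j := by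
  intro j
  set rss := (1 / (n : ℝ)) * ∑ i, (X *ᵥ nodewiseRow j (θhat j)) i ^ 2
  have hrss : rss ≤ tau2 j := by
    have hpen : 0 ≤ lam j * ∑ k, |θhat j k| :=
      mul_nonneg (hlam j).le (sum_nonneg fun _ _ => abs_nonneg _)
    simp only [rss, mulVec_nodewiseRow, htau j]
    linarith
  have hrow : ∀ k, Theta j k = nodewiseRow j (θhat j) k / tau2 j := hTheta j
  have hquad : ∑ k, ∑ l, Theta j k * Sigma k l * Theta j l = rss / tau2 j ^ 2 := by
    simp only [hrow]
    rw [quadForm_div]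
    simp only [hSigma]
    rw [quadForm_smul_gram]
  have hτ := htaupos j
  calc ∑ k, ∑ l, Theta j k * Sigma k l * Theta j l
      ≤ tau2 j / tau2 j ^ 2 := by rw [hquad]; gcongr
    _ = 1 / tau2 j := by field_simp

theorem stmt_5 (n p : ℕ) (hn : 0 < n) (hp : 2 ≤ p)
    (X : Matrix (Fin n) (Fin p) ℝ) (lam : Fin p → ℝ) (hlam : ∀ j, 0 < lam j)
    (θhat : ∀ j : Fin p, {k : Fin p // k ≠ j} → ℝ)
    (hmin : ∀ j : Fin p, ∀ θ : {k : Fin p // k ≠ j} → ℝ,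
      (1 / (2 * (n : ℝ))) * ∑ i, (X i j - ∑ k, X i k.1 * θhat j k) ^ 2
          + lam j * ∑ k, |θhat j k| ≤
      (1 / (2 * (n : ℝ))) * ∑ i, (X i j - ∑ k, X i k.1 * θ k) ^ 2
          + lam j * ∑ k, |θ k|)
    (tau2 : Fin p → ℝ)
    (htau : ∀ j, tau2 j =
      (1 / (n : ℝ)) * ∑ i, (X i j - ∑ k, X i k.1 * θhat j k) ^ 2
          + lam j * ∑ k, |θhat j k|)
    (htaupos : ∀ j, 0 < tau2 j)
    (Theta : Matrix (Fin p) (Fin p) ℝ)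
    (hTheta : ∀ j k, Theta j k =
      (if h : k = j then (1 : ℝ) else -(θhat j ⟨k, h⟩)) / tau2 j)
    (Sigma : Matrix (Fin p) (Fin p) ℝ)
    (hSigma : ∀ k l, Sigma k l = (1 / (n : ℝ)) * ∑ i, X i k * X i l) :
    ∀ j : Fin p, ∑ k, ∑ l, Theta j k * Sigma k l * Theta j l ≤ 1 / tau2 j :=
  stmt_5_general n p X lam hlam θhat tau2 htau htaupos Theta hTheta Sigma hSigma
end
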